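/- Setting u = 1 in the tautological representation gives a representation conjugate into SO(3,1): there exists P ∈ GL(4,ℝ) and a real symmetric matrix J of signature (3,1) such that the matrices P ρ₁(T) P⁻¹, P ρ₁(U) P⁻¹, P ρ₁(A) P⁻¹, P ρ₁(L) P⁻¹ all preserve J; in particular ρ₁ preserves a real symmetric bilinear form of signature (3,1). -/

import Mathlib

open Matrix

noncomputable section

/-- ρ₁(T): the tautological representation of Bi(3) at u = 1, as a real matrix. -/
def R1T : Matrix (Fin 4) (Fin 4) ℝ :=
  !![1, 0, 0, 0; -2, 2, -1, 2; 0, 1, 0, 0; 0, 0, 0, 1]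

/-- ρ₁(U). -/
def R1U : Matrix (Fin 4) (Fin 4) ℝ :=
  !![2, 0, 0, -1; -1, 1/2, 1/2, -1/2; -2, -1/2, 3/2, 1/2; 1, 0, 0, 0]

/-- ρ₁(A). -/
def R1A : Matrix (Fin 4) (Fin 4) ℝ :=
  !![1, 0, 0, 0; 0, 0, 0, 1; -2, 2, -1, 2; 0, 1, 0, 0]

/-- ρ₁(L). -/
def R1L : Matrix (Fin 4) (Fin 4) ℝ :=
  !![0, -1/2, 1/2, -1/2; -1, 1/2, 1/2, -1/2; -4, 1, 0, 1; -1, -1/2, 1/2, 1/2]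

/-- The invariant symmetric bilinear form. -/
def Jmat : Matrix (Fin 4) (Fin 4) ℝ :=
  !![0, 1, 1, 1; 1, 1, -1, -1; 1, -1, 1, -1; 1, -1, -1, 1]

/-- Rational congruence bringing `Jmat` to `diag(1,1,3,-1)`. -/
def Q0 : Matrix (Fin 4) (Fin 4) ℝ :=
  !![0, 1, 1, 1; 1, -1/2, -1/2, -1; 0, 1/2, -1/2, 0; 0, 0, 1, 0]

lemma Q0_transpose : Q0ᵀ = !![0, 1, 0, 0; 1, -1/2, 1/2, 0; 1, -1/2, -1/2, 1; 1, -1, 0, 0] := by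
  ext i j
  fin_cases i <;> fin_cases j <;> simp [Q0, Matrix.vecHead, Matrix.vecTail, Function.comp]

lemma Q0_congr : Q0ᵀ * Jmat * Q0 = Matrix.diagonal ![1, 1, 3, -1] := by
  rw [Q0_transpose]
  ext i j
  fin_cases i <;> fin_cases j <;>
    simp [Q0, Jmat, Matrix.mul_apply, Fin.sum_univ_four, Matrix.diagonal, Matrix.vecHead, Matrix.vecTail, Function.comp] <;> norm_num

lemma Q0_unit : IsUnit Q0 := by
  apply IsUnit.of_mul_eq_one (b := (!![1, 1, -1, -1; 0, 0, 2, 1; 0, 0, 0, 1; 1, 0, -2, -2] : Matrix (Fin 4) (Fin 4) ℝ))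
  ext i j
  fin_cases i <;> fin_cases j <;>
    simp [Q0, Matrix.mul_apply, Fin.sum_univ_four, Matrix.one_apply, Matrix.vecHead, Matrix.vecTail, Function.comp] <;> norm_num

lemma sqrt3_ne : Real.sqrt 3 ≠ 0 := by positivity

lemma Dfac_unit : IsUnit (Matrix.diagonal ![(1:ℝ), 1, (Real.sqrt 3)⁻¹, 1]) := by
  rw [Matrix.isUnit_iff_isUnit_det, Matrix.det_diagonal, isUnit_iff_ne_zero]
  simp [Fin.prod_univ_four, sqrt3_ne]

lemma preservesJ (M : Matrix (Fin 4) (Fin 4) ℝ)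
    (h : Mᵀ * Jmat * M = Jmat) :
    ((1 : Matrix (Fin 4) (Fin 4) ℝ) * M * (1 : Matrix (Fin 4) (Fin 4) ℝ)⁻¹)ᵀ * Jmat *
      ((1 : Matrix (Fin 4) (Fin 4) ℝ) * M * (1 : Matrix (Fin 4) (Fin 4) ℝ)⁻¹) = Jmat := by
  simpa using h

set_option maxHeartbeats 1000000 in
/-- the representation ρ₁ is conjugate into SO(3,1): there are P ∈ GL(4,ℝ)
and a real symmetric matrix J of signature (3,1) (congruent to diag(1,1,1,-1)) such that
the conjugated generators P ρ₁(g) P⁻¹ all preserve J. -/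
theorem rho_one_conjugate_into_SO31 :
    ∃ P : Matrix (Fin 4) (Fin 4) ℝ, IsUnit P ∧
      ∃ J : Matrix (Fin 4) (Fin 4) ℝ, J.IsSymm ∧
        (∃ Q : Matrix (Fin 4) (Fin 4) ℝ, IsUnit Q ∧
          Qᵀ * J * Q = Matrix.diagonal ![1, 1, 1, -1]) ∧
        ∀ M ∈ ({R1T, R1U, R1A, R1L} : Set (Matrix (Fin 4) (Fin 4) ℝ)),
          (P * M * P⁻¹)ᵀ * J * (P * M * P⁻¹) = J := by
  refine ⟨1, isUnit_one, Jmat, ?_, ?_, ?_⟩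
  · -- symmetric
    ext i j
    fin_cases i <;> fin_cases j <;> simp [Jmat, Matrix.IsSymm, Matrix.vecHead, Matrix.vecTail, Function.comp]
  · -- congruent to diag(1,1,1,-1)
    set D : Matrix (Fin 4) (Fin 4) ℝ := Matrix.diagonal ![(1:ℝ), 1, (Real.sqrt 3)⁻¹, 1] with hD
    refine ⟨Q0 * D, Q0_unit.mul Dfac_unit, ?_⟩
    have hDt : Dᵀ = D := by rw [hD, Matrix.diagonal_transpose]
    calc (Q0 * D)ᵀ * Jmat * (Q0 * D)
        = D * (Q0ᵀ * Jmat * Q0) * D := by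
          rw [Matrix.transpose_mul, hDt]; simp only [Matrix.mul_assoc]
      _ = D * Matrix.diagonal ![1, 1, 3, -1] * D := by rw [Q0_congr]
      _ = Matrix.diagonal ![1, 1, 1, -1] := by
          rw [hD, Matrix.diagonal_mul_diagonal, Matrix.diagonal_mul_diagonal]
          apply congrArg Matrix.diagonal
          funext i
          have hs : Real.sqrt 3 * Real.sqrt 3 = 3 := Real.mul_self_sqrt (by norm_num)
          fin_cases i <;> simp [Matrix.vecHead, Matrix.vecTail, Function.comp]
          field_simp
          rw [sq, hs]
  · -- generators preserve Jmat
    intro M hM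
    have key : ∀ N NT : Matrix (Fin 4) (Fin 4) ℝ, Nᵀ = NT → NT * Jmat * N = Jmat →
        ((1 : Matrix (Fin 4) (Fin 4) ℝ) * N * (1 : Matrix (Fin 4) (Fin 4) ℝ)⁻¹)ᵀ * Jmat *
          ((1 : Matrix (Fin 4) (Fin 4) ℝ) * N * (1 : Matrix (Fin 4) (Fin 4) ℝ)⁻¹) = Jmat := by
      intro N NT h1 h2
      apply preservesJ
      rw [h1, h2]
    rcases hM with h | h | h | h <;> subst h
    · apply key R1T (!![1, -2, 0, 0; 0, 2, 1, 0; 0, -1, 0, 0; 0, 2, 0, 1])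
      · ext i j; fin_cases i <;> fin_cases j <;> simp [R1T, Matrix.vecHead, Matrix.vecTail, Function.comp]
      · ext i j
        fin_cases i <;> fin_cases j <;>
          simp [R1T, Jmat, Matrix.mul_apply, Fin.sum_univ_four, Matrix.vecHead, Matrix.vecTail, Function.comp] <;> norm_num
    · apply key R1U (!![2, -1, -2, 1; 0, 1/2, -1/2, 0; 0, 1/2, 3/2, 0; -1, -1/2, 1/2, 0])
      · ext i j; fin_cases i <;> fin_cases j <;> simp [R1U, Matrix.vecHead, Matrix.vecTail, Function.comp] <;> norm_num
      · ext i j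
        fin_cases i <;> fin_cases j <;>
          simp [R1U, Jmat, Matrix.mul_apply, Fin.sum_univ_four, Matrix.vecHead, Matrix.vecTail, Function.comp] <;> norm_num
    · apply key R1A (!![1, 0, -2, 0; 0, 0, 2, 1; 0, 0, -1, 0; 0, 1, 2, 0])
      · ext i j; fin_cases i <;> fin_cases j <;> simp [R1A, Matrix.vecHead, Matrix.vecTail, Function.comp]
      · ext i j
        fin_cases i <;> fin_cases j <;>
          simp [R1A, Jmat, Matrix.mul_apply, Fin.sum_univ_four, Matrix.vecHead, Matrix.vecTail, Function.comp] <;> norm_num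
    · apply key R1L (!![0, -1, -4, -1; -1/2, 1/2, 1, -1/2; 1/2, 1/2, 0, 1/2; -1/2, -1/2, 1, 1/2])
      · ext i j; fin_cases i <;> fin_cases j <;> simp [R1L, Matrix.vecHead, Matrix.vecTail, Function.comp] <;> norm_num
      · ext i j
        fin_cases i <;> fin_cases j <;>
          simp [R1L, Jmat, Matrix.mul_apply, Fin.sum_univ_four, Matrix.vecHead, Matrix.vecTail, Function.comp] <;> norm_num

end
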